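/- arXiv:1603.04231 — 3 statements merged into one kernel-verified Lean document; each statement's English description precedes it below -/
import Mathlib

section
/- For any γ in ℤ_p^×, the assignment X ↦ (1+X)^γ - 1 (interpreted via the binomial series) defines a continuous ring endomorphism of 𝔽_p[[X]], and for γ a unit it is an automorphism. -/
/-!
Since `(1+X)^γ - 1` has no constant term, substituting it for `X` is a well-defined continuous
ring endomorphism of `𝔽_p[[X]]`. Its linear coefficient is `γ mod p`, a unit when `γ` is, and a
power series `u X + O(X²)` with `u` a unit has a compositional inverse; substituting that
inverse undoes the substitution.
-/

/-- The binomial series `(1+X)^γ = ∑_n C(γ,n) Xⁿ ∈ 𝔽_p[[X]]` for a `p`-adic integer `γ`.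
The `n`-th coefficient is the binomial coefficient `C(γ,n)` reduced mod `p`; by Lucas'
theorem it only depends on `γ` modulo `p^(n+1)`, so it may be computed from the
approximation `γ.appr (n+1) ∈ ℕ` of `γ`. -/
noncomputable def onePlusXPadicPow (p : ℕ) [Fact p.Prime] (γ : ℤ_[p]) :
    PowerSeries (ZMod p) :=
  PowerSeries.mk fun n => ((γ.appr (n + 1)).choose n : ZMod p)

open PowerSeries

namespace PowerSeries

variable {R : Type*} [CommRing R]

theorem X_pow_dvd_subst_of_X_pow_dvd {P : R⟦X⟧} (hP : constantCoeff P = 0) {n : ℕ} {g : R⟦X⟧}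
    (hg : X ^ n ∣ g) : X ^ n ∣ subst P g := by
  obtain ⟨t, rfl⟩ := hg
  have hP' := HasSubst.of_constantCoeff_zero' hP
  rw [subst_mul hP', subst_pow hP', subst_X hP']
  exact dvd_mul_of_dvd_left (pow_dvd_pow_of_dvd (X_dvd_iff.mpr hP) n) _

theorem subst_bijective_of_isUnit_coeff_one {P : R⟦X⟧} (hP : constantCoeff P = 0)
    (hP' : IsUnit (coeff 1 P)) : Function.Bijective (subst P : R⟦X⟧ → R⟦X⟧) := by
  have hP₀ := HasSubst.of_constantCoeff_zero' hP
  have hQ₀ := HasSubst.substInvOfIsUnit P hP'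
  refine Function.bijective_iff_has_inverse.mpr ⟨subst (P.substInvOfIsUnit hP'), ?_, ?_⟩
  · intro f
    rw [subst_comp_subst_apply hP₀ hQ₀, subst_substInvOfIsUnit_right P hP hP', X_subst]
  · intro f
    rw [subst_comp_subst_apply hQ₀ hP₀, subst_substInvOfIsUnit_left P hP hP', X_subst]

end PowerSeries

namespace PadicInt

variable {p : ℕ} [Fact p.Prime]

theorem toZMod_eq_natCast_appr (γ : ℤ_[p]) {n : ℕ} (hn : n ≠ 0) :
    toZMod γ = ((γ.appr n : ℕ) : ZMod p) := by
  have hspan : Ideal.span {(p : ℤ_[p]) ^ n} ≤ IsLocalRing.maximalIdeal ℤ_[p] := by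
    rw [Ideal.span_singleton_le_iff_mem, maximalIdeal_eq_span_p]
    exact Ideal.pow_mem_of_mem _ (Ideal.mem_span_singleton_self _) n (Nat.pos_of_ne_zero hn)
  have hker : γ - γ.appr n ∈ RingHom.ker (toZMod : ℤ_[p] →+* ZMod p) := by
    rw [ker_toZMod]
    exact hspan (appr_spec n γ)
  rwa [RingHom.mem_ker, map_sub, map_natCast, sub_eq_zero] at hker

end PadicInt

theorem constantCoeff_onePlusXPadicPow (p : ℕ) [Fact p.Prime] (γ : ℤ_[p]) :
    constantCoeff (onePlusXPadicPow p γ) = 1 := by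
  rw [← coeff_zero_eq_constantCoeff_apply]
  simp [onePlusXPadicPow]

theorem coeff_one_onePlusXPadicPow (p : ℕ) [Fact p.Prime] (γ : ℤ_[p]) :
    coeff 1 (onePlusXPadicPow p γ) = PadicInt.toZMod γ := by
  simp [onePlusXPadicPow, PadicInt.toZMod_eq_natCast_appr γ two_ne_zero]

/-- For any `γ ∈ ℤ_p^×`, the assignment `X ↦ (1+X)^γ - 1` defines a
continuous ring endomorphism of `𝔽_p[[X]]` (continuity is expressed `X`-adically), and for
`γ` a unit it is an automorphism. -/
theorem statement_2 (p : ℕ) [Fact p.Prime] (γ : ℤ_[p]) :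
    ∃ f : PowerSeries (ZMod p) →+* PowerSeries (ZMod p),
      f PowerSeries.X = onePlusXPadicPow p γ - 1 ∧
      (∀ n : ℕ, ∃ m : ℕ, ∀ g : PowerSeries (ZMod p),
        PowerSeries.X ^ m ∣ g → PowerSeries.X ^ n ∣ f g) ∧
      (IsUnit γ → Function.Bijective f) := by
  have hs : constantCoeff (onePlusXPadicPow p γ - 1) = 0 := by
    simp [constantCoeff_onePlusXPadicPow]
  have hs' := HasSubst.of_constantCoeff_zero' hs
  refine ⟨(substAlgHom hs').toRingHom, substAlgHom_X hs',
    fun n => ⟨n, fun g hg => ?_⟩, fun hγ => ?_⟩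
  · simpa [coe_substAlgHom] using X_pow_dvd_subst_of_X_pow_dvd hs hg
  · have hu : IsUnit (coeff 1 (onePlusXPadicPow p γ - 1)) := by
      simpa [coeff_one_onePlusXPadicPow] using hγ.map PadicInt.toZMod
    simpa [coe_substAlgHom] using subst_bijective_of_isUnit_coeff_one hs hu
end

section
/- Let u ∈ E_Δ^{sep} satisfy φ_α(u) = u for all α ∈ Δ. Then u ∈ 𝔽_p. In particular, the intersection of the fixed rings of all partial Frobenii on E_Δ^{sep} equals 𝔽_p. -/
/-!
Write `u = f / (X_1 ⋯ X_d)^n` with `f` a power series. Since `φ_α` multiplies `X_1 ⋯ X_d` by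
`X_α^(p-1)`, the equation `φ_α u = u` becomes `φ_α f = X_α^((p-1) n) f`. Comparing coefficients
along the `X_α`-direction, a nonzero coefficient at `X_α`-exponent `k ≠ n` would force one at an
exponent on the same side of `n` and strictly smaller than `k`, which is impossible. Hence
`f = b (X_1 ⋯ X_d)^n` and `u = b` with `b` fixed by every partial Frobenius `σ_α` of
`⊗_α 𝔽_{q_α}`. Finally, the coordinates of `b` in a product basis containing `1 ⊗ ⋯ ⊗ 1`, read
along any line in the `α`-th direction, assemble into an element of `𝔽_{q_α}` fixed by `x ↦ x^p`,
i.e. into an element of `𝔽_p`; so only the coordinate at `1 ⊗ ⋯ ⊗ 1` survives. The same slicing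
shows that each `σ_α` is injective.
-/

open scoped TensorProduct

open Function MvPowerSeries

theorem exists_algebraMap_eq_of_pow_eq_self {p : ℕ} [Fact p.Prime] {K : Type*} [Field K]
    [Algebra (ZMod p) K] {x : K} (hx : x ^ p = x) : ∃ c : ZMod p, algebraMap (ZMod p) K c = x := by
  have : CharP K p := charP_of_injective_algebraMap' (ZMod p) p
  rw [← Subfield.mem_bot_iff_pow_eq_self K p, ← ZMod.fieldRange_castHom_eq_bot p] at hx
  obtain ⟨c, rfl⟩ := hx
  exact ⟨c, RingHom.congr_fun (RingHom.ext_zmod _ _) c⟩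

namespace PiTensorProduct

variable {ι R : Type*} [Fintype ι] [DecidableEq ι] [CommRing R] {κ M : ι → Type*}
  [∀ i, AddCommGroup (M i)] [∀ i, Module R (M i)] (b : ∀ i, Module.Basis (κ i) R (M i))

noncomputable def basisSlice (α : ι) (m : ∀ i, κ i) : (⨂[R] i, M i) →ₗ[R] M α :=
  (b α).repr.symm.toLinearMap ∘ₗ Finsupp.lcomapDomain (update m α) (update_injective m α) ∘ₗ
    (Basis.piTensorProduct b).repr.toLinearMap

theorem repr_basisSlice (α : ι) (m : ∀ i, κ i) (a : ⨂[R] i, M i) (k : κ α) :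
    (b α).repr (basisSlice b α m a) k = (Basis.piTensorProduct b).repr a (update m α k) := by
  simp [basisSlice, Finsupp.lcomapDomain]

theorem basisSlice_tprod (α : ι) (m : ∀ i, κ i) (x : ∀ i, M i) :
    basisSlice b α m (PiTensorProduct.tprod R x) =
      (∏ i ∈ Finset.univ.erase α, (b i).repr (x i) (m i)) • x α := by
  refine (b α).repr.injective (Finsupp.ext fun k => ?_)
  rw [repr_basisSlice, Basis.piTensorProduct_repr_tprod_apply, map_smul,
    Finsupp.smul_apply, smul_eq_mul, ← Finset.prod_erase_mul _ _ (Finset.mem_univ α)]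
  congr 1
  · exact Finset.prod_congr rfl fun i hi => by rw [update_of_ne (Finset.ne_of_mem_erase hi)]
  · rw [update_self]

end PiTensorProduct

section PartialFrobenius

open PiTensorProduct

variable {ι : Type*} [Fintype ι] [DecidableEq ι] {p : ℕ} [Fact p.Prime] {K : ι → Type*}
  [∀ i, Field (K i)] [∀ i, Algebra (ZMod p) (K i)]
  {σ : ι → (⨂[ZMod p] i, K i) →+* (⨂[ZMod p] i, K i)}
  (hσ : ∀ (α : ι) (x : ∀ i, K i), σ α (PiTensorProduct.tprod (ZMod p) x) =
    PiTensorProduct.tprod (ZMod p) (update x α (x α ^ p)))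
include hσ

theorem basisSlice_partialFrobenius {κ : ι → Type*}
    (b : ∀ i, Module.Basis (κ i) (ZMod p) (K i)) (α : ι) (m : ∀ i, κ i) (a : ⨂[ZMod p] i, K i) :
    basisSlice b α m (σ α a) = basisSlice b α m a ^ p := by
  have : CharP (K α) p := charP_of_injective_algebraMap' (ZMod p) p
  induction a using PiTensorProduct.induction_on with
  | smul_tprod r x =>
    have hcoord : ∀ i ∈ Finset.univ.erase α, update x α (x α ^ p) i = x i :=
      fun i hi => update_of_ne (Finset.ne_of_mem_erase hi) _ _
    rw [ZMod.map_smul, hσ, map_smul, map_smul, basisSlice_tprod,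
      basisSlice_tprod, Finset.prod_congr rfl fun i hi => by rw [hcoord i hi],
      update_self, smul_pow, smul_pow, ZMod.pow_card, ZMod.pow_card]
  | add y z hy hz => rw [map_add, map_add, map_add, hy, hz, add_pow_char]

theorem injective_partialFrobenius (α : ι) : Injective (σ α) := by
  let b i := Module.Basis.ofVectorSpace (ZMod p) (K i)
  refine (injective_iff_map_eq_zero (σ α)).mpr fun a ha => ?_
  refine (Basis.piTensorProduct b).repr.injective (Finsupp.ext fun m => ?_)
  have hslice : basisSlice b α m a = 0 := by
    rw [← pow_eq_zero_iff (Fact.out : p.Prime).ne_zero,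
      ← basisSlice_partialFrobenius hσ, ha, map_zero]
  simpa [repr_basisSlice] using congr($((b α).repr.congr_arg hslice) (m α))

theorem exists_eq_algebraMap_of_forall_partialFrobenius_eq {a : ⨂[ZMod p] i, K i}
    (ha : ∀ α, σ α a = a) : ∃ c : ZMod p, a = algebraMap (ZMod p) _ c := by
  have hone i : LinearIndepOn (ZMod p) id ({1} : Set (K i)) :=
    (linearIndepOn_singleton_iff _).mpr one_ne_zero
  let b i := Module.Basis.extend (hone i)
  let o i : (hone i).extend (Set.subset_univ _) := ⟨1, (hone i).subset_extend _ rfl⟩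
  have hbo i : b i (o i) = 1 := Module.Basis.extend_apply_self _ _
  have hrepr_one i : (b i).repr 1 = Finsupp.single (o i) 1 := by
    simpa [hbo] using (b i).repr_self (o i)
  have hcoord (m : ∀ i, (hone i).extend (Set.subset_univ _)) (hm : m ≠ o) :
      (Basis.piTensorProduct b).repr a m = 0 := by
    obtain ⟨α, hα⟩ := ne_iff.mp hm
    have hfix : basisSlice b α m a ^ p = basisSlice b α m a := by
      rw [← basisSlice_partialFrobenius hσ, ha]
    obtain ⟨c, hc⟩ := exists_algebraMap_eq_of_pow_eq_self hfix
    have hrepr := repr_basisSlice b α m a (m α)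
    rw [update_eq_self, ← hc, Algebra.algebraMap_eq_smul_one, map_smul, hrepr_one,
      Finsupp.smul_apply, Finsupp.single_eq_of_ne hα, smul_zero] at hrepr
    exact hrepr.symm
  have hbasis_one : Basis.piTensorProduct b o = 1 := by
    rw [Basis.piTensorProduct_apply, PiTensorProduct.one_def]
    exact congrArg _ (funext hbo)
  refine ⟨(Basis.piTensorProduct b).repr a o, (Basis.piTensorProduct b).repr.injective ?_⟩
  ext m
  rw [Algebra.algebraMap_eq_smul_one, ← hbasis_one, map_smul, Module.Basis.repr_self,
    Finsupp.smul_apply]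
  by_cases hm : m = o
  · rw [hm, Finsupp.single_eq_same, smul_eq_mul, mul_one]
  · rw [hcoord m hm, Finsupp.single_eq_of_ne hm, smul_zero]

end PartialFrobenius

theorem eq_zero_of_frobenius_eq_shift {M : Type*} [Zero M] {τ : M → M} (hτ : Injective τ)
    (hτ0 : τ 0 = 0) {p n : ℕ} (hp : 1 < p) {a : ℕ → M}
    (h : ∀ k, (if p ∣ k then τ (a (k / p)) else 0) =
      if (p - 1) * n ≤ k then a (k - (p - 1) * n) else 0)
    {k : ℕ} (hk : k ≠ n) : a k = 0 := by
  induction k using Nat.strong_induction_on with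
  | _ k ih =>
  obtain ⟨q, rfl⟩ : ∃ q, p = q + 1 := ⟨p - 1, by omega⟩
  have hq : 0 < q := by omega
  simp only [Nat.add_sub_cancel] at h
  rcases Nat.lt_or_gt_of_ne hk with hlt | hgt
  · -- the exponent `(q + 1) k - q n` lies further below `n` than `k`
    have hqk : q * k < q * n := Nat.mul_lt_mul_of_pos_left hlt hq
    have hk' := h ((q + 1) * k)
    rw [if_pos (dvd_mul_right _ _), Nat.mul_div_cancel_left _ (by omega)] at hk'
    refine hτ (hk'.trans ?_ |>.trans hτ0.symm)
    split_ifs with hle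
    · exact ih _ (by rw [add_mul, one_mul] at hle ⊢; omega) (by rw [add_mul, one_mul]; omega)
    · rfl
  · -- the exponent `(k + q n) / (q + 1)` lies strictly between `n` and `k`
    have hqk : q * n < q * k := Nat.mul_lt_mul_of_pos_left hgt hq
    have hk' := h (k + q * n)
    rw [if_pos (Nat.le_add_left _ _), Nat.add_sub_cancel] at hk'
    rw [← hk']
    split_ifs with hdvd
    · obtain ⟨j, hj⟩ := hdvd
      rw [hj, Nat.mul_div_cancel_left _ (by omega)]
      have hjn : n < j := by
        by_contra! hjn
        have := Nat.mul_le_mul_left q hjn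
        rw [add_mul, one_mul] at hj
        omega
      have hjk : j < k := by
        by_contra! hjk
        have := Nat.mul_le_mul_left q hjk
        rw [add_mul, one_mul] at hj
        omega
      rw [ih j hjk hjn.ne', hτ0]
    · rfl

namespace Finsupp

variable {ι : Type*}

theorem update_apply_self {M : Type*} [Zero M] (m : ι →₀ M) (α : ι) (k : M) :
    m.update α k α = k := by
  classical
  simp

theorem update_tsub_single (m : ι →₀ ℕ) (α : ι) (k c : ℕ) :
    m.update α k - single α c = m.update α (k - c) := by
  classical
  ext i
  by_cases hi : i = α <;> simp [update_apply, hi]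

end Finsupp

section PartialFrobeniusPowerSeries

variable {ι R : Type*} [CommRing R]

noncomputable def partialFrobenius (p : ℕ) (τ : R →+* R) (α : ι) (f : MvPowerSeries ι R) :
    MvPowerSeries ι R :=
  fun m => if p ∣ m α then τ (coeff (m.update α (m α / p)) f) else 0

theorem coeff_partialFrobenius (p : ℕ) (τ : R →+* R) (α : ι) (f : MvPowerSeries ι R)
    (m : ι →₀ ℕ) : coeff m (partialFrobenius p τ α f) =
      if p ∣ m α then τ (coeff (m.update α (m α / p)) f) else 0 := rfl

theorem partialFrobenius_monomial {p : ℕ} (hp : 0 < p) (τ : R →+* R) (α : ι) (e : ι →₀ ℕ)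
    (r : R) : partialFrobenius p τ α (monomial e r) = monomial (e.update α (p * e α)) (τ r) := by
  classical
  ext m
  rw [coeff_partialFrobenius, coeff_monomial, coeff_monomial]
  by_cases hdvd : p ∣ m α
  · obtain ⟨k, hk⟩ := hdvd
    rw [if_pos ⟨k, hk⟩, hk, Nat.mul_div_cancel_left _ hp, apply_ite τ, map_zero]
    refine if_congr ⟨?_, ?_⟩ rfl rfl <;> rintro rfl
    · rw [Finsupp.update_idem, Finsupp.update_apply_self, ← hk, Finsupp.update_self]
    · rw [Finsupp.update_apply_self] at hk
      rw [Finsupp.update_idem, ← Nat.eq_of_mul_eq_mul_left hp hk, Finsupp.update_self]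
  · rw [if_neg hdvd, if_neg (by rintro rfl; simp [Finsupp.update_apply_self] at hdvd)]

theorem coeff_eq_zero_of_partialFrobenius_eq {p n : ℕ} (hp : 1 < p) {τ : R →+* R}
    (hτ : Injective τ) {α : ι} {f : MvPowerSeries ι R}
    (hf : partialFrobenius p τ α f = X α ^ ((p - 1) * n) * f) {m : ι →₀ ℕ} (hm : m α ≠ n) :
    coeff m f = 0 := by
  have key := eq_zero_of_frobenius_eq_shift hτ (map_zero τ) hp
    (a := fun k => coeff (m.update α k) f) (fun k => ?_) hm
  · simpa using key
  have := congrArg (coeff (m.update α k)) hf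
  simpa only [coeff_partialFrobenius, Finsupp.update_idem, Finsupp.update_apply_self, X_pow_eq,
    coeff_monomial_mul, Finsupp.single_le_iff, Finsupp.update_tsub_single, one_mul] using this

theorem map_coeff_eq_of_partialFrobenius_eq {p n : ℕ} (hp : 0 < p) {τ : R →+* R} {α : ι}
    {f : MvPowerSeries ι R} (hf : partialFrobenius p τ α f = X α ^ ((p - 1) * n) * f)
    {m : ι →₀ ℕ} (hm : m α = n) : τ (coeff m f) = coeff m f := by
  have := congrArg (coeff (m.update α (p * n))) hf
  simp only [coeff_partialFrobenius, Finsupp.update_idem, Finsupp.update_apply_self, X_pow_eq,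
    coeff_monomial_mul, Finsupp.single_le_iff, Finsupp.update_tsub_single, one_mul,
    dvd_mul_right, if_true, Nat.mul_div_cancel_left _ hp] at this
  have hpn : p * n - (p - 1) * n = n := by
    rw [← Nat.sub_mul, Nat.sub_sub_self hp]
    exact one_mul n
  rwa [if_pos (Nat.mul_le_mul_right _ (Nat.sub_le _ _)), hpn, ← hm, Finsupp.update_self] at this

theorem monomial_one_mem_nonZeroDivisors (e : ι →₀ ℕ) :
    monomial e (1 : R) ∈ nonZeroDivisors (MvPowerSeries ι R) := by
  refine mem_nonZeroDivisors_iff_right.mpr fun f hf => ?_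
  ext m
  simpa [coeff_add_mul_monomial] using congrArg (coeff (m + e)) hf

variable [Fintype ι]

theorem prod_X_pow_eq_monomial (n : ℕ) :
    (∏ i, X i : MvPowerSeries ι R) ^ n = monomial (Finsupp.equivFunOnFinite.symm fun _ => n) 1 := by
  classical
  rw [Finset.prod_congr rfl fun i _ => X_def i, prod_monomial, monomial_pow,
    Finset.prod_const_one, one_pow]
  refine congrArg (monomial · 1) (Finsupp.ext fun i => ?_)
  simp [Finsupp.single_apply]

theorem partialFrobenius_prod_X_pow {p : ℕ} (hp : 0 < p) (τ : R →+* R) (α : ι) (n : ℕ) :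
    partialFrobenius p τ α ((∏ i, X i : MvPowerSeries ι R) ^ n) =
      X α ^ ((p - 1) * n) * (∏ i, X i) ^ n := by
  classical
  rw [prod_X_pow_eq_monomial, partialFrobenius_monomial hp, map_one, X_pow_eq,
    monomial_mul_monomial, one_mul]
  refine congrArg (monomial · 1) (Finsupp.ext fun i => ?_)
  by_cases hi : i = α
  · subst hi
    have : p * n = (p - 1) * n + n := by
      rw [← Nat.succ_mul, Nat.succ_eq_add_one, Nat.sub_add_cancel hp]
    simpa [Finsupp.update_apply_self] using this
  · simp [Finsupp.update_apply, hi]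

theorem eq_C_mul_prod_X_pow_of_partialFrobenius_eq {p n : ℕ} (hp : 1 < p) {τ : ι → R →+* R}
    (hτ : ∀ α, Injective (τ α)) {f : MvPowerSeries ι R}
    (hf : ∀ α, partialFrobenius p (τ α) α f = X α ^ ((p - 1) * n) * f) :
    f = C (coeff (Finsupp.equivFunOnFinite.symm fun _ => n) f) * (∏ i, X i) ^ n := by
  classical
  rw [prod_X_pow_eq_monomial, ← monomial_zero_eq_C_apply, monomial_mul_monomial, zero_add,
    mul_one]
  ext m
  rw [coeff_monomial]
  split_ifs with hm
  · rw [hm]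
  · obtain ⟨α, hα⟩ : ∃ α, m α ≠ n := by
      by_contra! h
      exact hm (Finsupp.ext fun i => by simp [h i])
    exact coeff_eq_zero_of_partialFrobenius_eq hp (hτ α) (hf α) hα

theorem exists_eq_algebraMap_C_of_forall_partialFrobenius_eq {p : ℕ} (hp : 1 < p)
    {τ : ι → R →+* R} (hτ : ∀ α, Injective (τ α))
    {φ : ι → Localization.Away (∏ i, X i : MvPowerSeries ι R) →+*
      Localization.Away (∏ i, X i : MvPowerSeries ι R)}
    (hφ : ∀ α f, φ α (algebraMap _ _ f) = algebraMap _ _ (partialFrobenius p (τ α) α f))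
    {u : Localization.Away (∏ i, X i : MvPowerSeries ι R)} (hu : ∀ α, φ α u = u) :
    ∃ b : R, (∀ α, τ α b = b) ∧ u = algebraMap (MvPowerSeries ι R) _ (C b) := by
  obtain ⟨n, f, hf⟩ := IsLocalization.Away.surj (∏ i, X i : MvPowerSeries ι R) u
  have ht : (∏ i, X i : MvPowerSeries ι R) ∈ nonZeroDivisors _ := by
    rw [← pow_one (∏ i, X i), prod_X_pow_eq_monomial]
    exact monomial_one_mem_nonZeroDivisors _
  have hinj : Injective (algebraMap (MvPowerSeries ι R)
      (Localization.Away (∏ i, X i : MvPowerSeries ι R))) :=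
    IsLocalization.injective _ (Submonoid.powers_le.mpr ht)
  have hfrob α : partialFrobenius p (τ α) α f = X α ^ ((p - 1) * n) * f := by
    rw [← map_pow] at hf
    have h := congrArg (φ α) hf
    rw [map_mul, hu, hφ, hφ, partialFrobenius_prod_X_pow (by omega)] at h
    refine (mul_cancel_right_mem_nonZeroDivisors (pow_mem ht n)).mp (hinj ?_)
    rw [map_mul, map_mul, map_mul, ← h, map_mul, ← hf]
    ring
  refine ⟨coeff (Finsupp.equivFunOnFinite.symm fun _ => n) f,
    fun α => map_coeff_eq_of_partialFrobenius_eq (by omega) (hfrob α) (by simp), ?_⟩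
  refine (IsLocalization.Away.algebraMap_pow_isUnit (∏ i, X i : MvPowerSeries ι R) n)
    |>.mul_left_injective ?_
  dsimp only
  rw [hf, ← map_pow, ← map_mul, ← eq_C_mul_prod_X_pow_of_partialFrobenius_eq hp hτ hfrob]

end PartialFrobeniusPowerSeries

theorem statement_10_general (p d : ℕ) [Fact p.Prime]
    (K : Fin d → Type) [∀ i, Field (K i)] [∀ i, Algebra (ZMod p) (K i)]
    (σ : ∀ _ : Fin d, (⨂[ZMod p] i, K i) →+* (⨂[ZMod p] i, K i))
    (hσ : ∀ (α : Fin d) (x : ∀ i, K i),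
      σ α (PiTensorProduct.tprod (ZMod p) x) =
        PiTensorProduct.tprod (ZMod p) (Function.update x α ((x α) ^ p)))
    (φ : ∀ _ : Fin d,
      Localization.Away (∏ i : Fin d, MvPowerSeries.X (σ := Fin d) (R := ⨂[ZMod p] i, K i) i) →+*
      Localization.Away (∏ i : Fin d, MvPowerSeries.X (σ := Fin d) (R := ⨂[ZMod p] i, K i) i))
    (hφ : ∀ (α : Fin d) (f : MvPowerSeries (Fin d) (⨂[ZMod p] i, K i)),
      φ α (algebraMap _ _ f) =
        algebraMap (MvPowerSeries (Fin d) (⨂[ZMod p] i, K i)) _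
          ((fun m => if p ∣ m α
              then σ α (MvPowerSeries.coeff (Finsupp.update m α (m α / p)) f)
              else 0 : (Fin d →₀ ℕ) → (⨂[ZMod p] i, K i)))) :
    ∀ u : Localization.Away
        (∏ i : Fin d, MvPowerSeries.X (σ := Fin d) (R := ⨂[ZMod p] i, K i) i),
      (∀ α, φ α u = u) →
      ∃ c : ZMod p,
        u = algebraMap (MvPowerSeries (Fin d) (⨂[ZMod p] i, K i)) _
              (MvPowerSeries.C (σ := Fin d) (R := ⨂[ZMod p] i, K i) (algebraMap (ZMod p) _ c)) := by
  intro u hu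
  obtain ⟨b, hb, rfl⟩ := exists_eq_algebraMap_C_of_forall_partialFrobenius_eq
    (Fact.out : p.Prime).one_lt (injective_partialFrobenius hσ) hφ hu
  obtain ⟨c, rfl⟩ := exists_eq_algebraMap_of_forall_partialFrobenius_eq hσ hb
  exact ⟨c, rfl⟩

/-- Let `u ∈ E_Δ^{sep}` satisfy `φ_α(u) = u` for all `α ∈ Δ`.  Then
`u ∈ 𝔽_p`.  In particular the intersection of the fixed rings of all partial Frobenii on
`E_Δ^{sep}` equals `𝔽_p`.

`E_Δ^{sep}` is the inductive limit over collections of finite separable extensions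
`E'_α = 𝔽_{q_α}((X'_α))` of `𝔽_p((X_α))` of
`E'_Δ = (⊗_{α,𝔽_p} 𝔽_{q_α})[[X'_α : α ∈ Δ]][1/X_Δ]`, so the statement is equivalent to its
validity at every level `E'_Δ`; we formalize one level: `B = ⊗_{α,𝔽_p} 𝔽_{q_α}` is a
tensor product of finite fields, `E' = B[[X'_1,…,X'_d]][1/X_Δ]`, and the partial Frobenius
`φ_α` raises the `α`-th tensor component of each coefficient to the `p`-th power (via the
partial Frobenius `σ_α` of `B`), sends `X'_α ↦ X'^p_α` and fixes the other variables —
equivalently, it is given by the explicit coefficientwise formula below. -/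
theorem statement_10 (p d : ℕ) [Fact p.Prime] (hd : 1 ≤ d)
    (K : Fin d → Type) [∀ i, Field (K i)] [∀ i, Finite (K i)] [∀ i, Algebra (ZMod p) (K i)]
    (σ : ∀ _ : Fin d, (⨂[ZMod p] i, K i) →+* (⨂[ZMod p] i, K i))
    (hσ : ∀ (α : Fin d) (x : ∀ i, K i),
      σ α (PiTensorProduct.tprod (ZMod p) x) =
        PiTensorProduct.tprod (ZMod p) (Function.update x α ((x α) ^ p)))
    (φ : ∀ _ : Fin d,
      Localization.Away (∏ i : Fin d, MvPowerSeries.X (σ := Fin d) (R := ⨂[ZMod p] i, K i) i) →+*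
      Localization.Away (∏ i : Fin d, MvPowerSeries.X (σ := Fin d) (R := ⨂[ZMod p] i, K i) i))
    (hφ : ∀ (α : Fin d) (f : MvPowerSeries (Fin d) (⨂[ZMod p] i, K i)),
      φ α (algebraMap _ _ f) =
        algebraMap (MvPowerSeries (Fin d) (⨂[ZMod p] i, K i)) _
          ((fun m => if p ∣ m α
              then σ α (MvPowerSeries.coeff (Finsupp.update m α (m α / p)) f)
              else 0 : (Fin d →₀ ℕ) → (⨂[ZMod p] i, K i)))) :
    ∀ u : Localization.Away
        (∏ i : Fin d, MvPowerSeries.X (σ := Fin d) (R := ⨂[ZMod p] i, K i) i),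
      (∀ α, φ α u = u) →
      ∃ c : ZMod p,
        u = algebraMap (MvPowerSeries (Fin d) (⨂[ZMod p] i, K i)) _
              (MvPowerSeries.C (σ := Fin d) (R := ⨂[ZMod p] i, K i) (algebraMap (ZMod p) _ c)) :=
  statement_10_general p d K σ hσ φ hφ
end

section
/- The Koszul complex Φ^•(E_Δ^{sep}) formed from the operators id − φ_α (α ∈ Δ) on E_Δ^{sep} is acyclic in nonzero degrees, and its 0-th cohomology (the simultaneous kernel of all id − φ_α) equals 𝔽_p. -/
/-- The Koszul-type differential built from commuting additive endomorphisms
`f α` of `M` : the component of `d c` at `T` is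
`∑_{β ∈ T} (−1)^{ε(T∖{β},β)}·(id − f β)(c (T∖{β}))`. -/
noncomputable def koszulD {ι M : Type*} [LinearOrder ι] [AddCommGroup M]
    (f : ι → M →+ M) (c : Finset ι → M) : Finset ι → M := fun T =>
  ∑ β ∈ T, ((-1 : ℤ) ^ (((T.erase β).filter (fun a => a < β)).card)) •
    (c (T.erase β) - f β (c (T.erase β)))

namespace Stmt16

variable {ι : Type} [LinearOrder ι] {E : Type} [CommRing E]

def sgn (T : Finset ι) (β : ι) : ℤ := (-1) ^ ((T.filter (fun a => a < β)).card)

lemma sgn_sq (T : Finset ι) (β : ι) : sgn T β * sgn T β = 1 := by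
  unfold sgn
  rw [← pow_add, ← two_mul, pow_mul]
  norm_num

lemma sgn_smul_sgn_smul (T : Finset ι) (β : ι) (v : E) : sgn T β • sgn T β • v = v := by
  rw [smul_smul, sgn_sq, one_smul]

lemma koszulD_eq (φ : ι → E →+* E) (c : Finset ι → E) (T : Finset ι) :
    koszulD (fun α => (φ α).toAddMonoidHom) c T
      = ∑ β ∈ T, sgn T β • (c (T.erase β) - φ β (c (T.erase β))) := by
  unfold koszulD sgn
  refine Finset.sum_congr rfl fun β hβ => ?_
  rw [Finset.filter_erase, Finset.erase_eq_of_notMem (by simp)]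
  simp

lemma sgn_erase_of_lt {T : Finset ι} {β γ : ι} (hβ : β ∈ T) (h : β < γ) :
    sgn (T.erase β) γ = - sgn T γ := by
  unfold sgn
  rw [Finset.filter_erase, Finset.card_erase_of_mem (by simp [hβ, h])]
  have hpos : 0 < (T.filter (fun a => a < γ)).card :=
    Finset.card_pos.2 ⟨β, by simp [hβ, h]⟩
  obtain ⟨k, hk⟩ : ∃ k, (T.filter (fun a => a < γ)).card = k + 1 :=
    ⟨_, (Nat.succ_pred_eq_of_pos hpos).symm⟩
  rw [hk]
  simp [pow_succ]

lemma sgn_erase_of_not_lt {T : Finset ι} {β γ : ι} (h : ¬ β < γ) :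
    sgn (T.erase β) γ = sgn T γ := by
  unfold sgn
  rw [Finset.filter_erase, Finset.erase_eq_of_notMem (by simp [h])]

lemma sgn_swap {T : Finset ι} {β γ : ι} (hβ : β ∈ T) (hγ : γ ∈ T) (hne : β ≠ γ) :
    sgn T β * sgn (T.erase β) γ = -(sgn T γ * sgn (T.erase γ) β) := by
  rcases lt_or_gt_of_ne hne with h | h
  · rw [sgn_erase_of_lt hβ h, sgn_erase_of_not_lt (not_lt_of_gt h)]
    ring
  · rw [sgn_erase_of_lt hγ h, sgn_erase_of_not_lt (not_lt_of_gt h)]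
    ring

lemma koszulD_add (φ : ι → E →+* E) (c c' : Finset ι → E) (T : Finset ι) :
    koszulD (fun α => (φ α).toAddMonoidHom) (fun U => c U + c' U) T
      = koszulD (fun α => (φ α).toAddMonoidHom) c T
        + koszulD (fun α => (φ α).toAddMonoidHom) c' T := by
  rw [koszulD_eq, koszulD_eq, koszulD_eq, ← Finset.sum_add_distrib]
  refine Finset.sum_congr rfl fun β hβ => ?_
  rw [← smul_add]
  congr 1
  rw [map_add]
  ring

lemma koszulD_sub (φ : ι → E →+* E) (c c' : Finset ι → E) (T : Finset ι) :
    koszulD (fun α => (φ α).toAddMonoidHom) (fun U => c U - c' U) T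
      = koszulD (fun α => (φ α).toAddMonoidHom) c T
        - koszulD (fun α => (φ α).toAddMonoidHom) c' T := by
  rw [koszulD_eq, koszulD_eq, koszulD_eq, ← Finset.sum_sub_distrib]
  refine Finset.sum_congr rfl fun β hβ => ?_
  rw [← smul_sub]
  congr 1
  rw [map_sub]
  ring

lemma dd_zero (φ : ι → E →+* E) (hφ : ∀ α β x, φ α (φ β x) = φ β (φ α x))
    (c : Finset ι → E) (T : Finset ι) :
    koszulD (fun α => (φ α).toAddMonoidHom)
      (koszulD (fun α => (φ α).toAddMonoidHom) c) T = 0 := by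
  classical
  set D : ι → E →+ E := fun β => AddMonoidHom.id E - (φ β).toAddMonoidHom with hD
  have hDapp : ∀ β (y : E), D β y = y - φ β y := fun β y => rfl
  have hkos : ∀ (x : Finset ι → E) (U : Finset ι),
      koszulD (fun α => (φ α).toAddMonoidHom) x U = ∑ β ∈ U, sgn U β • D β (x (U.erase β)) := by
    intro x U; rw [koszulD_eq]; simp only [hDapp]
  rw [hkos]
  have expand : ∀ β ∈ T, sgn T β • D β
      (koszulD (fun α => (φ α).toAddMonoidHom) c (T.erase β))
      = ∑ γ ∈ T, (if γ ≠ β then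
          (sgn T β * sgn (T.erase β) γ) • D β (D γ (c ((T.erase β).erase γ))) else 0) := by
    intro β hβ
    rw [hkos, map_sum, Finset.smul_sum, ← Finset.sum_filter, Finset.filter_ne']
    refine Finset.sum_congr rfl fun γ hγ => ?_
    rw [map_zsmul, smul_smul]
  rw [Finset.sum_congr rfl expand, ← Finset.sum_product']
  refine Finset.sum_involution (fun p _ => p.swap) ?_ ?_ (fun p hp => by
      simp only [Finset.mem_product] at hp ⊢; exact ⟨hp.2, hp.1⟩) (fun p _ => rfl)
  · rintro ⟨β, γ⟩ hp
    simp only [Finset.mem_product] at hp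
    dsimp only [Prod.swap]
    by_cases hne : γ = β
    · simp [hne]
    · rw [if_pos hne, if_pos (Ne.symm hne)]
      have hcomm : D β (D γ (c ((T.erase β).erase γ)))
          = D γ (D β (c ((T.erase γ).erase β))) := by
        rw [Finset.erase_right_comm]
        simp only [hDapp, map_sub, hφ]
        ring
      rw [hcomm, sgn_swap hp.1 hp.2 (Ne.symm hne), neg_smul, neg_add_cancel]
  · rintro ⟨β, γ⟩ hp hne
    intro hswap
    have : γ = β := congrArg Prod.fst hswap
    rw [if_neg (by simp [this])] at hne
    exact hne rfl
lemma main_lemma (φ : ι → E →+* E) (hφ : ∀ α β x, φ α (φ β x) = φ β (φ α x))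
    (Esub : Finset ι → Subring E)
    (hmono : ∀ S T : Finset ι, S ⊆ T → Esub S ≤ Esub T)
    (hfix : ∀ (S : Finset ι) (α : ι), α ∉ S → ∀ x ∈ Esub S, φ α x = x)
    (hstab : ∀ (S : Finset ι) (α : ι), ∀ x ∈ Esub S, φ α x ∈ Esub S)
    (hsurj : ∀ (S : Finset ι) (α : ι), α ∈ S →
      ∀ y ∈ Esub S, ∃ x ∈ Esub S, x - φ α x = y)
    (hker : ∀ (S : Finset ι) (α : ι), α ∈ S →
      ∀ x ∈ Esub S, x - φ α x = 0 → x ∈ Esub (S.erase α)) :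
    ∀ (S : Finset ι) (r : ℕ), 1 ≤ r → ∀ c : Finset ι → E,
      (∀ T, T ⊆ S → T.card = r → c T ∈ Esub S) →
      (∀ T, T ⊆ S → T.card = r + 1 → koszulD (fun α => (φ α).toAddMonoidHom) c T = 0) →
      ∃ x : Finset ι → E, (∀ T, x T ∈ Esub S) ∧ (∀ T, ¬ T ⊆ S → x T = 0) ∧
        (∀ T, T ⊆ S → T.card = r → c T = koszulD (fun α => (φ α).toAddMonoidHom) x T) := by
  intro S
  induction S using Finset.strongInduction with
  | _ S ih =>
  intro r hr c hc hcoc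
  rcases S.eq_empty_or_nonempty with rfl | ⟨α, hα⟩
  · refine ⟨fun _ => 0, fun T => Subring.zero_mem _, fun T _ => rfl, fun T hT hTc => ?_⟩
    rw [Finset.subset_empty] at hT
    subst hT
    simp at hTc
    omega
  set S' := S.erase α with hS'def
  have hS'sub : S' ⊆ S := Finset.erase_subset _ _
  have hS'ssub : S' ⊂ S := Finset.erase_ssubset hα
  have hαS' : α ∉ S' := Finset.notMem_erase α S
  -- step 1 : choose x₁
  have hx1 : ∀ T : Finset ι, ∃ b : E, b ∈ Esub S ∧
      ((T ⊆ S' ∧ T.card = r - 1) → b - φ α b = sgn (insert α T) α • c (insert α T)) ∧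
      (¬(T ⊆ S' ∧ T.card = r - 1) → b = 0) := by
    intro T
    by_cases h : T ⊆ S' ∧ T.card = r - 1
    · have hαT : α ∉ T := fun hmem => hαS' (h.1 hmem)
      have hins : insert α T ⊆ S := Finset.insert_subset hα (h.1.trans hS'sub)
      have hcard : (insert α T).card = r := by
        rw [Finset.card_insert_of_notMem hαT, h.2, Nat.sub_add_cancel hr]
      obtain ⟨b, hb, hb2⟩ := hsurj S α hα _
        (Subring.zsmul_mem _ (hc _ hins hcard) (sgn (insert α T) α))
      exact ⟨b, hb, fun _ => hb2, fun h' => absurd h h'⟩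
    · exact ⟨0, Subring.zero_mem _, fun h' => absurd h' h, fun _ => rfl⟩
  choose x₁ hx₁mem hx₁spec hx₁zero using hx1
  -- claim A
  have hA : ∀ T, T ⊆ S → T.card = r → α ∈ T →
      koszulD (fun α => (φ α).toAddMonoidHom) x₁ T = c T := by
    intro T hTS hTc hαT
    rw [koszulD_eq]
    rw [Finset.sum_eq_single_of_mem α hαT ?_]
    · have h1 : T.erase α ⊆ S' := Finset.erase_subset_erase α hTS
      have h2 : (T.erase α).card = r - 1 := by rw [Finset.card_erase_of_mem hαT, hTc]
      have hspec := hx₁spec (T.erase α) ⟨h1, h2⟩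
      rw [Finset.insert_erase hαT] at hspec
      rw [hspec, sgn_smul_sgn_smul]
    · intro β hβ hβα
      have hz : x₁ (T.erase β) = 0 := hx₁zero _ (fun hcon =>
        hαS' (hcon.1 (Finset.mem_erase.2 ⟨Ne.symm hβα, hαT⟩)))
      rw [hz]
      simp
  -- claim B
  have hB : ∀ T, koszulD (fun α => (φ α).toAddMonoidHom) x₁ T ∈ Esub S := by
    intro T
    rw [koszulD_eq]
    exact Subring.sum_mem _ fun β _ => Subring.zsmul_mem _
      (Subring.sub_mem _ (hx₁mem _) (hstab S β _ (hx₁mem _))) _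
  set c' : Finset ι → E := fun T => c T - koszulD (fun α => (φ α).toAddMonoidHom) x₁ T
    with hc'def
  have hA' : ∀ T, T ⊆ S → T.card = r → α ∈ T → c' T = 0 := by
    intro T h1 h2 h3
    simp only [hc'def, hA T h1 h2 h3, sub_self]
  have hdc' : ∀ T, T ⊆ S → T.card = r + 1 →
      koszulD (fun α => (φ α).toAddMonoidHom) c' T = 0 := by
    intro T hT hTc
    rw [hc'def, koszulD_sub, hcoc T hT hTc, dd_zero φ hφ, sub_zero]
  -- claim C
  have hC : ∀ T, T ⊆ S' → T.card = r → c' T ∈ Esub S' := by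
    intro T hT hTc
    have hαT : α ∉ T := fun hmem => hαS' (hT hmem)
    have hTS : T ⊆ S := hT.trans hS'sub
    have hmemS : c' T ∈ Esub S := Subring.sub_mem _ (hc T hTS hTc) (hB T)
    have hU : insert α T ⊆ S := Finset.insert_subset hα hTS
    have hUc : (insert α T).card = r + 1 := by
      rw [Finset.card_insert_of_notMem hαT, hTc]
    have h0 := hdc' _ hU hUc
    rw [koszulD_eq] at h0
    rw [Finset.sum_eq_single_of_mem α (Finset.mem_insert_self α T) ?_] at h0
    · rw [Finset.erase_insert hαT] at h0
      have hv : c' T - φ α (c' T) = 0 := by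
        rw [← sgn_smul_sgn_smul (insert α T) α (c' T - φ α (c' T)), h0, smul_zero]
      exact hS'def ▸ hker S α hα _ hmemS hv
    · intro β hβ hβα
      have hsubβ : (insert α T).erase β ⊆ S := (Finset.erase_subset _ _).trans hU
      have hcardβ : ((insert α T).erase β).card = r := by
        rw [Finset.card_erase_of_mem hβ, hUc]
        omega
      have hαβ : α ∈ (insert α T).erase β :=
        Finset.mem_erase.2 ⟨Ne.symm hβα, Finset.mem_insert_self α T⟩
      rw [hA' _ hsubβ hcardβ hαβ]
      simp
  have hD : ∀ T, T ⊆ S' → T.card = r + 1 →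
      koszulD (fun α => (φ α).toAddMonoidHom) c' T = 0 :=
    fun T hT hTc => hdc' T (hT.trans hS'sub) hTc
  obtain ⟨x₂, hx₂mem, hx₂zero, hx₂eq⟩ := ih S' hS'ssub r hr c' hC hD
  refine ⟨fun T => x₁ T + x₂ T, ?_, ?_, ?_⟩
  · exact fun T => Subring.add_mem _ (hx₁mem T) (hmono S' S hS'sub (hx₂mem T))
  · intro T hT
    show x₁ T + x₂ T = 0
    rw [hx₁zero T (fun hcon => hT (hcon.1.trans hS'sub)),
      hx₂zero T (fun hcon => hT (hcon.trans hS'sub)), add_zero]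
  · intro T hTS hTc
    rw [koszulD_add]
    by_cases hαT : α ∈ T
    · rw [hA T hTS hTc hαT]
      have hz : koszulD (fun α => (φ α).toAddMonoidHom) x₂ T = 0 := by
        rw [koszulD_eq]
        apply Finset.sum_eq_zero
        intro β hβ
        by_cases hβα : β = α
        · subst hβα
          rw [hfix S' β hαS' _ (hx₂mem (T.erase β))]
          simp
        · rw [hx₂zero (T.erase β) (fun hcon =>
            hαS' (hcon (Finset.mem_erase.2 ⟨Ne.symm hβα, hαT⟩)))]
          simp
      rw [hz, add_zero]
    · have hT' : T ⊆ S' := fun b hb =>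
        Finset.mem_erase.2 ⟨fun h => hαT (h ▸ hb), hTS hb⟩
      have heq2 : c T - koszulD (fun α => (φ α).toAddMonoidHom) x₁ T
          = koszulD (fun α => (φ α).toAddMonoidHom) x₂ T := hx₂eq T hT' hTc
      rw [← heq2]
      ring
end Stmt16

/-- The Koszul complex `Φ^•(E_Δ^{sep})` formed from the operators
`id − φ_α` (`α ∈ Δ`) on `E_Δ^{sep}` is acyclic in nonzero degrees, and its `0`-th
cohomology (the simultaneous kernel of all `id − φ_α`) equals `𝔽_p`.

The ring `E_Δ^{sep}` (the inductive limit of completed tensor products of finite separable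
extensions of the `𝔽_p((X_α))`) is modelled by a commutative ring `E` of characteristic
`p` with commuting partial Frobenii `φ_α` and a compatible family of subrings
`E_S^{sep}` (`S ⊆ Δ`), together with the key inputs (cf. Statement 17): for `α ∈ S`,
`id − φ_α : E_S^{sep} → E_S^{sep}` is surjective with kernel `E_{S∖{α}}^{sep}`, and
`E_∅^{sep} = 𝔽_p`. -/
theorem statement_16 (p : ℕ) [Fact p.Prime] (ι : Type) [Fintype ι] [LinearOrder ι]
    (E : Type) [CommRing E] [CharP E p]
    (φ : ι → E →+* E)
    (hφcomm : ∀ α β, (φ α).comp (φ β) = (φ β).comp (φ α))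
    (Esub : Finset ι → Subring E)
    (hmono : ∀ S T : Finset ι, S ⊆ T → Esub S ≤ Esub T)
    (htop : Esub Finset.univ = ⊤)
    (hbot : (Esub ∅ : Set E) = Set.range (ZMod.castHom (dvd_refl p) E))
    (hfix : ∀ (S : Finset ι) (α : ι), α ∉ S → ∀ x ∈ Esub S, φ α x = x)
    (hstab : ∀ (S : Finset ι) (α : ι), ∀ x ∈ Esub S, φ α x ∈ Esub S)
    (hsurj : ∀ (S : Finset ι) (α : ι), α ∈ S →
      ∀ y ∈ Esub S, ∃ x ∈ Esub S, x - φ α x = y)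
    (hker : ∀ (S : Finset ι) (α : ι), α ∈ S →
      ∀ x ∈ Esub S, x - φ α x = 0 → x ∈ Esub (S.erase α)) :
    (∀ r : ℕ, 1 ≤ r → ∀ c : Finset ι → E,
      (∀ T : Finset ι, T.card = r + 1 → koszulD (fun α => (φ α).toAddMonoidHom) c T = 0) →
      ∃ x : Finset ι → E, ∀ T : Finset ι, T.card = r →
        c T = koszulD (fun α => (φ α).toAddMonoidHom) x T) ∧
    (∀ u : E, (∀ α, φ α u = u) ↔ ∃ c : ZMod p, u = ZMod.castHom (dvd_refl p) E c) := by
  have hφ : ∀ α β x, φ α (φ β x) = φ β (φ α x) := fun α β x => RingHom.congr_fun (hφcomm α β) x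
  constructor
  · intro r hr c hcoc
    obtain ⟨x, -, -, hx⟩ := Stmt16.main_lemma φ hφ Esub hmono hfix hstab hsurj hker
      Finset.univ r hr c (fun T _ _ => by rw [htop]; trivial) (fun T _ hT => hcoc T hT)
    exact ⟨x, fun T hT => hx T (Finset.subset_univ T) hT⟩
  · intro u
    constructor
    · intro hu
      have key : ∀ S : Finset ι, u ∈ Esub S → ∃ c : ZMod p, u = ZMod.castHom (dvd_refl p) E c := by
        intro S
        induction S using Finset.strongInduction with
        | _ S ih =>
        intro hu'
        rcases S.eq_empty_or_nonempty with rfl | ⟨α, hα⟩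
        · have hmem : u ∈ (Esub ∅ : Set E) := hu'
          rw [hbot] at hmem
          obtain ⟨c, hc⟩ := hmem
          exact ⟨c, hc.symm⟩
        · exact ih _ (Finset.erase_ssubset hα)
            (hker S α hα u hu' (by rw [hu α, sub_self]))
      exact key Finset.univ (by rw [htop]; trivial)
    · rintro ⟨c, rfl⟩ α
      exact RingHom.congr_fun
        (RingHom.ext_zmod ((φ α).comp (ZMod.castHom (dvd_refl p) E))
          (ZMod.castHom (dvd_refl p) E)) c
end
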